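/- For every n ≥ 0, every x ∈ ℝ^n and every z ∈ ℝ, one has ∫_ℝ f_{n+1}(z | x, y) f_n(y | x) dy = f_n(z | x); equivalently, ∫_ℝ c_{n+1}(F_n(z | x), F_n(y | x)) f_n(y | x) dy = 1. -/
import Mathlib

open MeasureTheory Set Filter
open scoped ENNReal NNReal

namespace PredictiveBayes

section Aux

/-- The CDF associated to a density. -/
noncomputable def cdfAux (f : ℝ → ℝ) (z : ℝ) : ℝ := ∫ t in Set.Iic z, f t

variable {f : ℝ → ℝ}

lemma cdfAux_nonneg (hp : ∀ z, 0 < f z) (z : ℝ) : 0 ≤ cdfAux f z :=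
  setIntegral_nonneg measurableSet_Iic fun t _ => (hp t).le

lemma cdfAux_le_one (hp : ∀ z, 0 < f z) (hi : Integrable f) (h1 : ∫ z, f z = 1) (z : ℝ) :
    cdfAux f z ≤ 1 :=
  h1 ▸ setIntegral_le_integral hi (Eventually.of_forall fun t => (hp t).le)

lemma cdfAux_mem_Icc (hp : ∀ z, 0 < f z) (hi : Integrable f) (h1 : ∫ z, f z = 1) (z : ℝ) :
    cdfAux f z ∈ Set.Icc (0:ℝ) 1 :=
  ⟨cdfAux_nonneg hp z, cdfAux_le_one hp hi h1 z⟩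

lemma support_eq_univ (hp : ∀ z, 0 < f z) : Function.support f = Set.univ := by
  ext t; simp [Function.support, (hp t).ne']

lemma cdfAux_pos (hp : ∀ z, 0 < f z) (hi : Integrable f) (z : ℝ) : 0 < cdfAux f z := by
  rw [cdfAux, setIntegral_pos_iff_support_of_nonneg_ae
    (Eventually.of_forall fun t => (hp t).le) hi.integrableOn]
  rw [support_eq_univ hp, Set.univ_inter, Real.volume_Iic]
  exact ENNReal.zero_lt_top

lemma cdfAux_strictMono (hp : ∀ z, 0 < f z) (hi : Integrable f) : StrictMono (cdfAux f) := by
  intro a b hab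
  have h2 : cdfAux f b - cdfAux f a = ∫ t in Set.Ioc a b, f t := by
    rw [cdfAux, cdfAux, intervalIntegral.integral_Iic_sub_Iic hi.integrableOn hi.integrableOn,
      intervalIntegral.integral_of_le hab.le]
  have h3 : 0 < ∫ t in Set.Ioc a b, f t := by
    rw [setIntegral_pos_iff_support_of_nonneg_ae
      (Eventually.of_forall fun t => (hp t).le) hi.integrableOn]
    rw [support_eq_univ hp, Set.univ_inter, Real.volume_Ioc]
    simpa using hab
  linarith

lemma cdfAux_continuous (hi : Integrable f) : Continuous (cdfAux f) := by
  have h : cdfAux f = fun z => (∫ t in (0:ℝ)..z, f t) + cdfAux f 0 := by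
    funext z
    rw [← intervalIntegral.integral_Iic_sub_Iic hi.integrableOn hi.integrableOn]
    simp [cdfAux]
  rw [h]
  exact (hi.continuous_primitive 0).add continuous_const

lemma cdfAux_measurable (hp : ∀ z, 0 < f z) (hi : Integrable f) :
    Measurable (cdfAux f) :=
  ((cdfAux_strictMono hp hi).monotone).measurable

/-- The probability measure with density `f`. -/
noncomputable def densMeasure (f : ℝ → ℝ) : Measure ℝ :=
  volume.withDensity fun t => ENNReal.ofReal (f t)

lemma densMeasure_Iic (hp : ∀ z, 0 < f z) (hi : Integrable f) (z : ℝ) :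
    densMeasure f (Set.Iic z) = ENNReal.ofReal (cdfAux f z) := by
  rw [densMeasure, withDensity_apply _ measurableSet_Iic, cdfAux,
    ← ofReal_integral_eq_lintegral_ofReal hi.integrableOn
      (Eventually.of_forall fun t => (hp t).le)]

lemma densMeasure_univ (hp : ∀ z, 0 < f z) (hi : Integrable f) (h1 : ∫ z, f z = 1) :
    densMeasure f Set.univ = 1 := by
  rw [densMeasure, withDensity_apply _ MeasurableSet.univ, Measure.restrict_univ,
    ← ofReal_integral_eq_lintegral_ofReal hi (Eventually.of_forall fun t => (hp t).le), h1,
    ENNReal.ofReal_one]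

lemma densMeasure_isProb (hp : ∀ z, 0 < f z) (hi : Integrable f) (h1 : ∫ z, f z = 1) :
    IsProbabilityMeasure (densMeasure f) :=
  ⟨densMeasure_univ hp hi h1⟩

lemma cdfAux_tendsto_atTop (hp : ∀ z, 0 < f z) (hi : Integrable f) (h1 : ∫ z, f z = 1) :
    Tendsto (cdfAux f) atTop (nhds 1) := by
  have h := tendsto_measure_Iic_atTop (densMeasure f)
  rw [densMeasure_univ hp hi h1] at h
  have h2 : Tendsto (fun z => (densMeasure f (Set.Iic z)).toReal) atTop
      (nhds (1:ℝ≥0∞).toReal) :=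
    (ENNReal.tendsto_toReal ENNReal.one_ne_top).comp h
  simp only [ENNReal.toReal_one] at h2
  convert h2 using 2 with z
  rw [densMeasure_Iic hp hi z, ENNReal.toReal_ofReal (cdfAux_nonneg hp z)]

lemma cdfAux_tendsto_atBot (hp : ∀ z, 0 < f z) (hi : Integrable f) (h1 : ∫ z, f z = 1) :
    Tendsto (cdfAux f) atBot (nhds 0) := by
  have hprob := densMeasure_isProb hp hi h1
  have hempty : ⋂ z : ℝ, Set.Iic z = (∅ : Set ℝ) := by
    ext x
    simp only [Set.mem_iInter, Set.mem_Iic, Set.mem_empty_iff_false, iff_false, not_forall,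
      not_le]
    exact ⟨x - 1, by linarith⟩
  have h := tendsto_measure_iInter_atBot (μ := densMeasure f) (s := fun z : ℝ => Set.Iic z)
    (fun z => measurableSet_Iic.nullMeasurableSet)
    (fun a b hab => Set.Iic_subset_Iic.mpr hab) ⟨0, measure_ne_top _ _⟩
  rw [hempty, measure_empty] at h
  have h2 : Tendsto (fun z : ℝ => (densMeasure f (Set.Iic z)).toReal) atBot
      (nhds (0:ℝ≥0∞).toReal) :=
    (ENNReal.tendsto_toReal ENNReal.zero_ne_top).comp h
  simp only [ENNReal.toReal_zero] at h2
  convert h2 using 2 with z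
  rw [densMeasure_Iic hp hi z, ENNReal.toReal_ofReal (cdfAux_nonneg hp z)]

lemma cdfAux_surj (hp : ∀ z, 0 < f z) (hi : Integrable f) (h1 : ∫ z, f z = 1)
    {a : ℝ} (ha : a ∈ Set.Ioo (0:ℝ) 1) : ∃ y, cdfAux f y = a := by
  obtain ⟨y1, hy1⟩ : ∃ y1, cdfAux f y1 < a :=
    ((cdfAux_tendsto_atBot hp hi h1).eventually (eventually_lt_nhds ha.1)).exists
  obtain ⟨y2, hy2⟩ : ∃ y2, a < cdfAux f y2 :=
    ((cdfAux_tendsto_atTop hp hi h1).eventually (eventually_gt_nhds ha.2)).exists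
  have h12 : y1 ≤ y2 := ((cdfAux_strictMono hp hi).lt_iff_lt.mp (hy1.trans hy2)).le
  obtain ⟨y, _, hy⟩ := intermediate_value_Icc h12 (cdfAux_continuous hi).continuousOn
    ⟨hy1.le, hy2.le⟩
  exact ⟨y, hy⟩

lemma densMeasure_map_cdfAux (hm : Measurable f) (hp : ∀ z, 0 < f z) (hi : Integrable f)
    (h1 : ∫ z, f z = 1) :
    (densMeasure f).map (cdfAux f) = volume.restrict (Set.Ioo 0 1) := by
  have hFm := cdfAux_measurable hp hi
  have hprob := densMeasure_isProb hp hi h1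
  have : IsProbabilityMeasure ((densMeasure f).map (cdfAux f)) :=
    Measure.isProbabilityMeasure_map hFm.aemeasurable
  refine Measure.ext_of_Iic _ _ fun a => ?_
  rw [Measure.map_apply hFm measurableSet_Iic, Measure.restrict_apply measurableSet_Iic]
  rcases le_or_gt a 0 with ha0 | ha0
  · have h1' : cdfAux f ⁻¹' Set.Iic a = ∅ := by
      ext y
      simp only [Set.mem_preimage, Set.mem_Iic, Set.mem_empty_iff_false, iff_false, not_le]
      exact lt_of_le_of_lt ha0 (cdfAux_pos hp hi y)
    have h2' : Set.Iic a ∩ Set.Ioo (0:ℝ) 1 = ∅ := by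
      ext v
      simp only [Set.mem_inter_iff, Set.mem_Iic, Set.mem_Ioo, Set.mem_empty_iff_false,
        iff_false, not_and, and_imp]
      intro hv hv0; linarith
    rw [h1', h2']; simp
  rcases lt_or_ge a 1 with ha1 | ha1
  · obtain ⟨y0, hy0⟩ := cdfAux_surj hp hi h1 ⟨ha0, ha1⟩
    have h1' : cdfAux f ⁻¹' Set.Iic a = Set.Iic y0 := by
      ext y
      simp only [Set.mem_preimage, Set.mem_Iic, ← hy0]
      exact (cdfAux_strictMono hp hi).le_iff_le
    have h2' : Set.Iic a ∩ Set.Ioo (0:ℝ) 1 = Set.Ioc 0 a := by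
      ext v
      simp only [Set.mem_inter_iff, Set.mem_Iic, Set.mem_Ioo, Set.mem_Ioc]
      constructor
      · rintro ⟨h, h0, _⟩; exact ⟨h0, h⟩
      · rintro ⟨h0, h⟩; exact ⟨h, h0, lt_of_le_of_lt h ha1⟩
    rw [h1', h2', densMeasure_Iic hp hi, hy0, Real.volume_Ioc, sub_zero]
  · have h1' : cdfAux f ⁻¹' Set.Iic a = Set.univ := by
      ext y
      simp only [Set.mem_preimage, Set.mem_Iic, Set.mem_univ, iff_true]
      exact (cdfAux_le_one hp hi h1 y).trans ha1
    have h2' : Set.Iic a ∩ Set.Ioo (0:ℝ) 1 = Set.Ioo 0 1 :=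
      Set.inter_eq_self_of_subset_right fun v hv => le_trans hv.2.le ha1
    rw [h1', h2', densMeasure_univ hp hi h1, Real.volume_Ioo, sub_zero, ENNReal.ofReal_one]

/-- The probability integral transform. -/
lemma integral_comp_cdfAux (hm : Measurable f) (hp : ∀ z, 0 < f z) (hi : Integrable f)
    (h1 : ∫ z, f z = 1) {g : ℝ → ℝ} (hg : Measurable g) :
    ∫ y, g (cdfAux f y) * f y = ∫ v in Set.Icc (0:ℝ) 1, g v := by
  have hFm := cdfAux_measurable hp hi
  have step1 : ∫ y, g (cdfAux f y) * f y = ∫ y, g (cdfAux f y) ∂(densMeasure f) := by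
    rw [densMeasure]
    have hco : (fun t => ENNReal.ofReal (f t)) = fun t => ((f t).toNNReal : ℝ≥0∞) := rfl
    have hmn : Measurable fun t => (f t).toNNReal := measurable_real_toNNReal.comp hm
    rw [hco, integral_withDensity_eq_integral_smul hmn]
    congr 1; funext y
    rw [NNReal.smul_def, Real.coe_toNNReal _ (hp y).le, mul_comm, smul_eq_mul]
  have step2 : ∫ y, g (cdfAux f y) ∂(densMeasure f)
      = ∫ v, g v ∂((densMeasure f).map (cdfAux f)) :=
    (integral_map hFm.aemeasurable hg.aestronglyMeasurable).symm
  rw [step1, step2, densMeasure_map_cdfAux hm hp hi h1,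
    ← MeasureTheory.integral_Icc_eq_integral_Ioo]

end Aux

/-- The copula recursion of Hahn–Martin–Walker: `hmwDensity f0 c n x` is the
predictive density `f_n(· | x)`, where `F_n(z | x) = ∫_{t ≤ z} f_n(t | x) dt` and
`f_{n+1}(z | x, y) = c_{n+1}(F_n(z | x), F_n(y | x)) · f_n(z | x)`. -/
noncomputable def hmwDensity (f0 : ℝ → ℝ) (c : ℕ → ℝ → ℝ → ℝ) :
    ∀ n, (Fin n → ℝ) → ℝ → ℝ
  | 0 => fun _ z => f0 z
  | n + 1 => fun x z =>
      c (n + 1) (∫ t in Set.Iic z, hmwDensity f0 c n (Fin.init x) t)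
          (∫ t in Set.Iic (x (Fin.last n)), hmwDensity f0 c n (Fin.init x) t) *
        hmwDensity f0 c n (Fin.init x) z

/-- **Theorem.** Under the copula recursion, for every `n`, `x ∈ ℝⁿ` and `z ∈ ℝ`,
`∫ f_{n+1}(z | x, y) f_n(y | x) dy = f_n(z | x)`. -/
theorem hmwDensity_integral_eq (f0 : ℝ → ℝ) (c : ℕ → ℝ → ℝ → ℝ)
    (hf0meas : Measurable f0) (hf0pos : ∀ z, 0 < f0 z)
    (hf0int : ∫ z, f0 z = 1)
    (hcmeas : ∀ n, 1 ≤ n → Measurable (Function.uncurry (c n)))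
    (hcpos : ∀ n, 1 ≤ n → ∀ u ∈ Set.Icc (0 : ℝ) 1, ∀ v ∈ Set.Icc (0 : ℝ) 1, 0 < c n u v)
    (hcmarg₁ : ∀ n, 1 ≤ n → ∀ v ∈ Set.Icc (0 : ℝ) 1, ∫ u in Set.Icc (0 : ℝ) 1, c n u v = 1)
    (hcmarg₂ : ∀ n, 1 ≤ n → ∀ u ∈ Set.Icc (0 : ℝ) 1, ∫ v in Set.Icc (0 : ℝ) 1, c n u v = 1) :
    ∀ (n : ℕ) (x : Fin n → ℝ) (z : ℝ),
      ∫ y, hmwDensity f0 c (n + 1) (Fin.snoc x y) z * hmwDensity f0 c n x y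
        = hmwDensity f0 c n x z := by
  have good : ∀ n (x : Fin n → ℝ),
      Measurable (hmwDensity f0 c n x) ∧ (∀ z, 0 < hmwDensity f0 c n x z) ∧
      Integrable (hmwDensity f0 c n x) ∧ ∫ z, hmwDensity f0 c n x z = 1 := by
    intro n
    induction n with
    | zero =>
      intro x
      have hi : Integrable f0 := by
        by_contra hcon
        rw [integral_undef hcon] at hf0int; norm_num at hf0int
      exact ⟨hf0meas, hf0pos, hi, hf0int⟩
    | succ n ih =>
      intro x
      obtain ⟨hm, hp, hi, h1⟩ := ih (Fin.init x)
      set g := hmwDensity f0 c n (Fin.init x) with hgdef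
      set v0 := cdfAux g (x (Fin.last n)) with hv0def
      have hveq : hmwDensity f0 c (n+1) x = fun z => c (n+1) (cdfAux g z) v0 * g z := rfl
      have hv0 : v0 ∈ Set.Icc (0:ℝ) 1 := cdfAux_mem_Icc hp hi h1 _
      have hcm : Measurable (fun u => c (n+1) u v0) := by
        have : (fun u => c (n+1) u v0) = Function.uncurry (c (n+1)) ∘ fun u => (u, v0) := rfl
        rw [this]
        exact (hcmeas (n+1) (by omega)).comp (measurable_id.prodMk measurable_const)
      have hmeas' : Measurable (hmwDensity f0 c (n+1) x) := by
        rw [hveq]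
        exact (hcm.comp (cdfAux_measurable hp hi)).mul hm
      have hpos' : ∀ z, 0 < hmwDensity f0 c (n+1) x z := by
        intro z
        rw [hveq]
        exact mul_pos (hcpos (n+1) (by omega) _ (cdfAux_mem_Icc hp hi h1 z) _ hv0) (hp z)
      have hint1 : ∫ z, hmwDensity f0 c (n+1) x z = 1 := by
        rw [hveq, integral_comp_cdfAux hm hp hi h1 hcm]
        exact hcmarg₁ (n+1) (by omega) v0 hv0
      have hint : Integrable (hmwDensity f0 c (n+1) x) := by
        by_contra hcon
        rw [integral_undef hcon] at hint1; norm_num at hint1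
      exact ⟨hmeas', hpos', hint, hint1⟩
  intro n x z
  obtain ⟨hm, hp, hi, h1⟩ := good n x
  set g := hmwDensity f0 c n x with hgdef
  set u := cdfAux g z with hudef
  have hu : u ∈ Set.Icc (0:ℝ) 1 := cdfAux_mem_Icc hp hi h1 _
  have hcm : Measurable (fun v => c (n+1) u v) := by
    have : (fun v => c (n+1) u v) = Function.uncurry (c (n+1)) ∘ fun v => (u, v) := rfl
    rw [this]
    exact (hcmeas (n+1) (by omega)).comp (measurable_const.prodMk measurable_id)
  have heq : (fun y => hmwDensity f0 c (n+1) (Fin.snoc x y) z * g y)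
      = fun y => g z * ((fun v => c (n+1) u v) (cdfAux g y) * g y) := by
    funext y
    simp only [hmwDensity, Fin.init_snoc, Fin.snoc_last, ← hgdef]
    show (c (n+1) (cdfAux g z) (cdfAux g y) * g z) * g y = _
    rw [← hudef]; ring
  rw [heq, integral_const_mul, integral_comp_cdfAux hm hp hi h1 hcm,
    hcmarg₂ (n+1) (by omega) u hu, mul_one]

end PredictiveBayes
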